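/- arXiv:1412.3518 — 3 statements merged into one kernel-verified Lean document; each statement's English description precedes it below -/
import Mathlib

section
/- In the voting model M with binary endogenous variables A, B, C, D, WIN, equations B = A, C = A, D = B ∧ C, WIN = A ∨ B ∨ D, and context u with A = 1 (so B = C = D = WIN = 1), with all worlds equally normal: B = 1 is an actual cause of WIN = 1 (with witness W⃗ = {A}, A ← 0), and consequently B = 1 ∧ C = 1 is not an actual cause of WIN = 1 (by minimality AC3). -/
open Classical

/-- A causal model over variable namespace ℕ (values are also coded as ℕ).
`V` is the finite set of endogenous variables; `F X ctx g` gives the value of the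
structural equation for `X` given a context `ctx` (assignment to the exogenous
variables) and an assignment `g` to the endogenous variables. -/
structure CM where
  V : Finset ℕ
  F : ℕ → (ℕ → ℕ) → (ℕ → ℕ) → ℕ

/-- `v` is a solution of all the structural equations of `M` in context `ctx`
(pinned to `0` outside `V` so that worlds are canonical). -/
def IsSol (M : CM) (ctx v : ℕ → ℕ) : Prop :=
  (∀ X ∈ M.V, v X = M.F X ctx v) ∧ ∀ X, X ∉ M.V → v X = 0

/-- `M` is recursive (acyclic): there is a total order on `V` such that each
equation depends only on strictly earlier endogenous variables. -/
def Recursive (M : CM) : Prop :=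
  ∃ ord : ℕ → ℕ, Set.InjOn ord ↑M.V ∧
    ∀ X ∈ M.V, ∀ ctx g h, (∀ Y ∈ M.V, ord Y < ord X → g Y = h Y) →
      M.F X ctx g = M.F X ctx h

/-- The model obtained by intervening according to the partial assignment `I`. -/
def CM.intervene (M : CM) (I : ℕ → Option ℕ) : CM :=
  ⟨M.V, fun X ctx g => (I X).getD (M.F X ctx g)⟩

/-- The intervention setting the variables in `S` to the values given by `f`. -/
def doSet (S : Finset ℕ) (f : ℕ → ℕ) : ℕ → Option ℕ :=
  fun Y => if Y ∈ S then some (f Y) else none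

/-- `(M, ctx) ⊨ [I](X = x)`. -/
def Sat (M : CM) (ctx : ℕ → ℕ) (I : ℕ → Option ℕ) (X x : ℕ) : Prop :=
  ∀ v, IsSol (M.intervene I) ctx v → v X = x

/-- Boolean combinations of primitive events `X = x`. -/
inductive BForm where
  | prim : ℕ → ℕ → BForm
  | not : BForm → BForm
  | and : BForm → BForm → BForm

def BForm.eval (v : ℕ → ℕ) : BForm → Prop
  | .prim X x => v X = x
  | .not φ => ¬ BForm.eval v φ
  | .and φ ψ => BForm.eval v φ ∧ BForm.eval v ψ

def BForm.vars : BForm → Finset ℕ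
  | .prim X _ => {X}
  | .not φ => φ.vars
  | .and φ ψ => φ.vars ∪ ψ.vars

/-- `(M, ctx) ⊨ [I]φ`. -/
def SatF (M : CM) (ctx : ℕ → ℕ) (I : ℕ → Option ℕ) (φ : BForm) : Prop :=
  ∀ v, IsSol (M.intervene I) ctx v → φ.eval v

/-- `M'` is a conservative extension of `M`: same exogenous variables (shared
namespace), `M.V ⊆ M'.V`, and for every context, every `X ∈ M.V`, and every
setting of the other variables of `M`, the intervened value of `X` agrees. -/
def ConsExt (M M' : CM) : Prop :=
  M.V ⊆ M'.V ∧
  ∀ ctx x, ∀ X ∈ M.V, ∀ w : ℕ → ℕ,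
    (Sat M ctx (doSet (M.V.erase X) w) X x ↔ Sat M' ctx (doSet (M.V.erase X) w) X x)

/-- The intervention `X⃗ ← x⃗', W⃗ ← w⃗` used in AC2(a). -/
def witI (Xs : Finset ℕ) (x' : ℕ → ℕ) (W : Finset ℕ) (w : ℕ → ℕ) : ℕ → Option ℕ :=
  fun Y => if Y ∈ Xs then some (x' Y) else if Y ∈ W then some (w Y) else none

/-- The intervention `X⃗ ← x⃗, Z⃗' ← z⃗, W⃗' ← w⃗` used in AC2(b) (here `vs` is the
actual solution, providing the actual values `z⃗`). -/
def acbI (Xs : Finset ℕ) (xv : ℕ → ℕ) (Z' : Finset ℕ) (vs : ℕ → ℕ)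
    (W' : Finset ℕ) (w : ℕ → ℕ) : ℕ → Option ℕ :=
  fun Y => if Y ∈ Xs then some (xv Y) else if Y ∈ Z' then some (vs Y)
    else if Y ∈ W' then some (w Y) else none

/-- `(W, w, x')` is a witness for AC2 (updated version, with AC2(b)). -/
def Wit (M : CM) (ctx : ℕ → ℕ) (Xs : Finset ℕ) (xv : ℕ → ℕ) (φ : BForm)
    (W : Finset ℕ) (w x' : ℕ → ℕ) : Prop :=
  W ⊆ M.V ∧ Xs ⊆ M.V \ W ∧
  SatF M ctx (witI Xs x' W w) (BForm.not φ) ∧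
  ∀ vs, IsSol M ctx vs → ∀ W' ⊆ W, ∀ Z' ⊆ M.V \ W,
    SatF M ctx (acbI Xs xv Z' vs W' w) φ

/-- `(W, w, x')` is a witness for AC2 in the original HP sense (with AC2(b'):
only `W` itself, not its subsets, is set to `w`). -/
def Wit' (M : CM) (ctx : ℕ → ℕ) (Xs : Finset ℕ) (xv : ℕ → ℕ) (φ : BForm)
    (W : Finset ℕ) (w x' : ℕ → ℕ) : Prop :=
  W ⊆ M.V ∧ Xs ⊆ M.V \ W ∧
  SatF M ctx (witI Xs x' W w) (BForm.not φ) ∧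
  ∀ vs, IsSol M ctx vs → ∀ Z' ⊆ M.V \ W,
    SatF M ctx (acbI Xs xv Z' vs W w) φ

/-- AC1: `X⃗ = x⃗` and `φ` hold in the actual world. -/
def AC1 (M : CM) (ctx : ℕ → ℕ) (Xs : Finset ℕ) (xv : ℕ → ℕ) (φ : BForm) : Prop :=
  ∀ v, IsSol M ctx v → (∀ X ∈ Xs, v X = xv X) ∧ φ.eval v

def PreCause (M : CM) (ctx : ℕ → ℕ) (Xs : Finset ℕ) (xv : ℕ → ℕ) (φ : BForm) : Prop :=
  AC1 M ctx Xs xv φ ∧ ∃ W w x', Wit M ctx Xs xv φ W w x'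

/-- The (updated) HP definition of actual cause: AC1 ∧ AC2 ∧ AC3. -/
def IsCause (M : CM) (ctx : ℕ → ℕ) (Xs : Finset ℕ) (xv : ℕ → ℕ) (φ : BForm) : Prop :=
  PreCause M ctx Xs xv φ ∧ ∀ Xs' ⊂ Xs, ¬ PreCause M ctx Xs' xv φ

def PreCause' (M : CM) (ctx : ℕ → ℕ) (Xs : Finset ℕ) (xv : ℕ → ℕ) (φ : BForm) : Prop :=
  AC1 M ctx Xs xv φ ∧ ∃ W w x', Wit' M ctx Xs xv φ W w x'

/-- The original HP definition of actual cause (with AC2(b')). -/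
def IsCause' (M : CM) (ctx : ℕ → ℕ) (Xs : Finset ℕ) (xv : ℕ → ℕ) (φ : BForm) : Prop :=
  PreCause' M ctx Xs xv φ ∧ ∀ Xs' ⊂ Xs, ¬ PreCause' M ctx Xs' xv φ

/-- An extended causal model: a causal model with a normality preorder on worlds. -/
structure ECM extends CM where
  normGE : (ℕ → ℕ) → (ℕ → ℕ) → Prop
  normGE_refl : ∀ s, normGE s s
  normGE_trans : ∀ s t u, normGE s t → normGE t u → normGE s u

/-- A world of `M`: an assignment to the endogenous variables (canonically `0` elsewhere). -/
def World (M : CM) (s : ℕ → ℕ) : Prop := ∀ X, X ∉ M.V → s X = 0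

/-- The world determined by the intervention `I` in context `ctx` is at least as
normal as the actual world `s_ctx`. -/
def NormAbove (M : ECM) (ctx : ℕ → ℕ) (I : ℕ → Option ℕ) : Prop :=
  ∀ s su, IsSol (M.toCM.intervene I) ctx s → IsSol M.toCM ctx su → M.normGE s su

/-- Witness for the extended HP definition: AC2 together with AC2(a⁺). -/
def EWit (M : ECM) (ctx : ℕ → ℕ) (Xs : Finset ℕ) (xv : ℕ → ℕ) (φ : BForm)
    (W : Finset ℕ) (w x' : ℕ → ℕ) : Prop :=
  Wit M.toCM ctx Xs xv φ W w x' ∧ NormAbove M ctx (witI Xs x' W w)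

def EPreCause (M : ECM) (ctx : ℕ → ℕ) (Xs : Finset ℕ) (xv : ℕ → ℕ) (φ : BForm) : Prop :=
  AC1 M.toCM ctx Xs xv φ ∧ ∃ W w x', EWit M ctx Xs xv φ W w x'

/-- The extended (normality-sensitive) HP definition of actual cause. -/
def EIsCause (M : ECM) (ctx : ℕ → ℕ) (Xs : Finset ℕ) (xv : ℕ → ℕ) (φ : BForm) : Prop :=
  EPreCause M ctx Xs xv φ ∧ ∀ Xs' ⊂ Xs, ¬ EPreCause M ctx Xs' xv φ

/-- In world `s`, variable `v0` takes on a value other than that specified by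
the equations of `M` in context `ctx`. -/
def Deviates (M : CM) (ctx : ℕ → ℕ) (v0 : ℕ) (s : ℕ → ℕ) : Prop :=
  ∀ v, IsSol (M.intervene (doSet (M.V.erase v0) s)) ctx v → v v0 ≠ s v0

/-- `(M, ctx)` respects the equations for `v0`: any world in which `v0` deviates
from its equation-determined value is not at least as normal as the actual world. -/
def Respects (M : ECM) (ctx : ℕ → ℕ) (v0 : ℕ) : Prop :=
  ∀ s, World M.toCM s → Deviates M.toCM ctx v0 s →
    ∀ su, IsSol M.toCM ctx su → ¬ M.normGE s su

/-- Conservative extension of extended causal models: conservative extension of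
the underlying models plus condition CE on the normality preorders. -/
def EConsExt (M M' : ECM) : Prop :=
  ConsExt M.toCM M'.toCM ∧
  ∀ ctx (W : Finset ℕ), W ⊆ M.V → ∀ w : ℕ → ℕ,
    (NormAbove M ctx (doSet W w) ↔ NormAbove M' ctx (doSet W w))

/-- Indicator of a proposition, used to express Boolean structural equations. -/
noncomputable def bI (p : Prop) : ℕ := if p then 1 else 0

/-- The voting model M: A = 0, B = 1, C = 2, D = 3, WIN = 4; A is set by the
context, B = A, C = A, D = B ∧ C, WIN = A ∨ B ∨ D; all worlds equally normal. -/
noncomputable def M15 : ECM :=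
  ⟨⟨{0, 1, 2, 3, 4}, fun X ctx g =>
    if X = 0 then ctx 0
    else if X = 1 then g 0
    else if X = 2 then g 0
    else if X = 3 then bI (g 1 = 1 ∧ g 2 = 1)
    else bI (g 0 = 1 ∨ g 1 = 1 ∨ g 3 = 1)⟩,
   fun _ _ => True, fun _ => trivial, fun _ _ _ _ _ => trivial⟩

/-! The voting equations are acyclic in the order A, B, C, D, WIN, so under every intervention
they have exactly one solution, computed by solving them in that order. Setting A and B to 0
makes every variable 0, while any intervention keeping B = 1 that leaves WIN alone or holds it at
its actual value forces WIN = 1; this is AC2 for B = 1. The empty conjunction never satisfies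
AC2, so B = 1 is minimal, and as a proper part of B = 1 ∧ C = 1 satisfying AC1 and AC2 it
violates AC3 for the latter. -/

section EmptyConjunction

variable {M : CM} {ctx : ℕ → ℕ} {xv : ℕ → ℕ} {φ : BForm} {W : Finset ℕ} {w x' : ℕ → ℕ}

theorem witI_empty_eq_acbI (vs : ℕ → ℕ) :
    witI ∅ x' W w = acbI ∅ xv ∅ vs W w := by
  funext Y
  simp [witI, acbI]

/-- With nothing intervened on besides `W`, AC2(a) and the instance `W' = W`, `Z' = ∅` of
AC2(b) are about the same intervention, so they clash as soon as it has a solution. -/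
theorem not_wit_empty {vs : ℕ → ℕ} (hvs : IsSol M ctx vs)
    (hsol : ∃ v, IsSol (M.intervene (witI ∅ x' W w)) ctx v) :
    ¬ Wit M ctx ∅ xv φ W w x' := by
  rintro ⟨-, -, hnot, hkeep⟩
  obtain ⟨v, hv⟩ := hsol
  have hφ := hkeep vs hvs W subset_rfl ∅ (Finset.empty_subset _) v
  rw [← witI_empty_eq_acbI] at hφ
  exact hnot v hv (hφ hv)

end EmptyConjunction

theorem EPreCause.eIsCause_singleton {M : ECM} {ctx xv : ℕ → ℕ} {φ : BForm} {X : ℕ}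
    (h : EPreCause M ctx {X} xv φ) (h₀ : ¬ EPreCause M ctx ∅ xv φ) :
    EIsCause M ctx {X} xv φ :=
  ⟨h, fun _ hXs => Finset.ssubset_singleton_iff.1 hXs ▸ h₀⟩

theorem EIsCause.not_of_ssubset {M : ECM} {ctx xv : ℕ → ℕ} {φ : BForm} {Xs Xs' : Finset ℕ}
    (hXs : Xs' ⊂ Xs) (h : EPreCause M ctx Xs' xv φ) : ¬ EIsCause M ctx Xs xv φ :=
  fun hc => hc.2 Xs' hXs h

noncomputable def votingSol (ctx : ℕ → ℕ) (I : ℕ → Option ℕ) : ℕ → ℕ :=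
  let a := (I 0).getD (ctx 0)
  let b := (I 1).getD a
  let c := (I 2).getD a
  let d := (I 3).getD (bI (b = 1 ∧ c = 1))
  let win := (I 4).getD (bI (a = 1 ∨ b = 1 ∨ d = 1))
  fun X => if X = 0 then a else if X = 1 then b else if X = 2 then c
    else if X = 3 then d else if X = 4 then win else 0

theorem isSol_intervene_M15_iff {ctx v : ℕ → ℕ} {I : ℕ → Option ℕ} :
    IsSol (M15.toCM.intervene I) ctx v ↔ v = votingSol ctx I := by
  simp only [IsSol, M15, CM.intervene, Finset.mem_insert, Finset.mem_singleton,
    forall_eq_or_imp, forall_eq]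
  constructor
  · rintro ⟨⟨e0, e1, e2, e3, e4⟩, hout⟩
    simp only [reduceIte, OfNat.ofNat_ne_zero, OfNat.ofNat_ne_one, Nat.reduceEqDiff] at e1 e3 e4
    funext X
    by_cases hX : X = 0 ∨ X = 1 ∨ X = 2 ∨ X = 3 ∨ X = 4
    · rcases hX with rfl | rfl | rfl | rfl | rfl <;> simp [votingSol, e0, e1, e2, e3, e4]
    · push Not at hX
      simp [votingSol, hX, hout X]
  · rintro rfl
    exact ⟨by simp [votingSol], fun X hX => by
      push Not at hX
      simp [votingSol, hX]⟩

theorem isSol_M15_iff {ctx v : ℕ → ℕ} : IsSol M15.toCM ctx v ↔ v = votingSol ctx fun _ => none :=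
  isSol_intervene_M15_iff (I := fun _ => none)

theorem satF_M15_iff {ctx : ℕ → ℕ} {I : ℕ → Option ℕ} {φ : BForm} :
    SatF M15.toCM ctx I φ ↔ φ.eval (votingSol ctx I) := by
  simp only [SatF, isSol_intervene_M15_iff, forall_eq]

theorem votingSol_win_of_B {ctx : ℕ → ℕ} {I : ℕ → Option ℕ} (hB : I 1 = some 1)
    (hWIN : I 4 = none ∨ I 4 = some 1) : votingSol ctx I 4 = 1 := by
  rcases hWIN with hWIN | hWIN <;> simp [votingSol, hB, hWIN, bI]

theorem eWit_B_WIN {ctx : ℕ → ℕ} (hA : ctx 0 = 1) :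
    EWit M15 ctx {1} (fun _ => 1) (.prim 4 1) {0} (fun _ => 0) (fun _ => 0) := by
  refine ⟨⟨by simp [M15], by simp [M15], ?_, ?_⟩, fun _ _ _ _ => trivial⟩
  · simp [satF_M15_iff, BForm.eval, votingSol, witI, bI]
  · intro vs hvs W' hW' Z' _
    rw [isSol_M15_iff] at hvs
    subst hvs
    rw [satF_M15_iff]
    apply votingSol_win_of_B
    · simp [acbI]
    · have h4W : 4 ∉ W' := fun h => by simpa using hW' h
      by_cases h4 : 4 ∈ Z'
      · right
        simp [acbI, h4, votingSol, hA, bI]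
      · left
        simp [acbI, h4, h4W]

theorem ePreCause_B_WIN {ctx : ℕ → ℕ} (hA : ctx 0 = 1) :
    EPreCause M15 ctx {1} (fun _ => 1) (.prim 4 1) := by
  refine ⟨fun v hv => ?_, _, _, _, eWit_B_WIN hA⟩
  rw [isSol_M15_iff] at hv
  subst hv
  simp [votingSol, hA, BForm.eval, bI]

theorem not_ePreCause_empty_M15 {ctx xv : ℕ → ℕ} {φ : BForm} : ¬ EPreCause M15 ctx ∅ xv φ :=
  fun ⟨_, _, _, _, hwit, _⟩ =>
    not_wit_empty (isSol_M15_iff.2 rfl) ⟨_, isSol_intervene_M15_iff.2 rfl⟩ hwit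

/-- in (M, u) with A = 1, B = 1 is an actual cause of WIN = 1
(with witness W⃗ = {A}, A ← 0), and consequently B = 1 ∧ C = 1 is not. -/
theorem voting_M :
    EWit M15 (fun _ => 1) {1} (fun _ => 1) (.prim 4 1) {0} (fun _ => 0) (fun _ => 0) ∧
    EIsCause M15 (fun _ => 1) {1} (fun _ => 1) (.prim 4 1) ∧
    ¬ EIsCause M15 (fun _ => 1) ({1, 2} : Finset ℕ) (fun _ => 1) (.prim 4 1) := by
  have hB := ePreCause_B_WIN (ctx := fun _ => 1) rfl
  exact ⟨eWit_B_WIN rfl, hB.eIsCause_singleton not_ePreCause_empty_M15,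
    EIsCause.not_of_ssubset (by decide) hB⟩
end

section
/- In the prisoner model with binary endogenous variables A, B, C, D, equation D = (A ∧ B) ∨ C, and context u with A = 1, B = 0, C = 1 (so D = 1): A = 1 is an actual cause of D = 1 under the original HP definition using AC2(b'), with witness W⃗ = {B, C}, w⃗ = (B = 1, C = 0); but A = 1 is not an actual cause of D = 1 under the updated HP definition using AC2(b), since (M, u) ⊨ [A ← 1, C ← 0](D = 0). -/
open Classical

/-- The prisoner model: A = 0, B = 1, C = 2, D = 3; A, B, C set by the context,
D = (A ∧ B) ∨ C. -/
noncomputable def MP : CM :=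
  ⟨{0, 1, 2, 3}, fun X ctx g =>
    if X = 3 then bI ((g 0 = 1 ∧ g 1 = 1) ∨ g 2 = 1) else ctx X⟩

/-- The context with A = 1, B = 0, C = 1. -/
def uP : ℕ → ℕ := fun i => if i = 1 then 0 else 1

/-!
Under AC2(b'), setting `B ← 1, C ← 0` makes `D` follow `A`, which gives the witness; the
smaller candidate `∅` fails because AC2(a) and AC2(b') then describe the same world. Under
AC2(b), the witness set cannot contain `D`, so AC2(a) forces `C ∈ W⃗` with `w(C) ≠ 1`; but then
the subset `W⃗' = {C}`, leaving `B` at its actual value `0`, already makes `D = 0`.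
-/

section General

variable {M : CM} {ctx : ℕ → ℕ}

theorem IsSol.intervene_apply {I : ℕ → Option ℕ} {v : ℕ → ℕ} {X a : ℕ}
    (hv : IsSol (M.intervene I) ctx v) (hX : X ∈ M.V) (hI : I X = some a) : v X = a := by
  rw [hv.1 X hX]
  simp [CM.intervene, hI]

theorem satF_iff_of_isSol_unique {I : ℕ → Option ℕ} {s : ℕ → ℕ} {φ : BForm}
    (hs : IsSol (M.intervene I) ctx s) (huniq : ∀ v, IsSol (M.intervene I) ctx v → v = s) :
    SatF M ctx I φ ↔ φ.eval s :=
  ⟨fun h => h s hs, fun h v hv => huniq v hv ▸ h⟩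

theorem witI_empty (x' : ℕ → ℕ) (W : Finset ℕ) (w : ℕ → ℕ) :
    witI ∅ x' W w = doSet W w := by
  funext Y; simp [witI, doSet]

theorem acbI_empty_empty (xv vs : ℕ → ℕ) (W : Finset ℕ) (w : ℕ → ℕ) :
    acbI ∅ xv ∅ vs W w = doSet W w := by
  funext Y; simp [acbI, doSet]

theorem not_preCause'_empty (hsol : ∀ I, ∃ v, IsSol (M.intervene I) ctx v)
    (xv : ℕ → ℕ) (φ : BForm) : ¬ PreCause' M ctx ∅ xv φ := by
  rintro ⟨-, W, w, x', -, -, hneg, hpos⟩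
  obtain ⟨vs, hvs⟩ := hsol fun _ => none
  obtain ⟨v, hv⟩ := hsol (doSet W w)
  have hφ := hpos vs hvs ∅ (Finset.empty_subset _)
  rw [acbI_empty_empty] at hφ
  rw [witI_empty] at hneg
  exact hneg v hv (hφ v hv)

theorem isCause'_singleton (hsol : ∀ I, ∃ v, IsSol (M.intervene I) ctx v)
    {X : ℕ} {xv : ℕ → ℕ} {φ : BForm} (h : PreCause' M ctx {X} xv φ) :
    IsCause' M ctx {X} xv φ := by
  refine ⟨h, fun Xs' hXs' => ?_⟩
  rw [Finset.eq_empty_of_ssubset_singleton hXs']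
  exact not_preCause'_empty hsol xv φ

/-- Under AC2(b) the outcome variable cannot lie in `W⃗`: setting it alone to its `w⃗`-value
must make `φ` true, while AC2(a) sets it to the same value and needs `φ` false. -/
theorem Wit.outcome_not_mem (hsol : ∀ I, ∃ v, IsSol (M.intervene I) ctx v)
    {Xs : Finset ℕ} {xv : ℕ → ℕ} {X x : ℕ} {W : Finset ℕ} {w x' : ℕ → ℕ}
    (hwit : Wit M ctx Xs xv (.prim X x) W w x') : X ∉ W := by
  obtain ⟨hWV, hXs, hneg, hpos⟩ := hwit
  intro hXW
  have hXXs : X ∉ Xs := fun h => (Finset.mem_sdiff.1 (hXs h)).2 hXW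
  obtain ⟨vs, hvs⟩ := hsol fun _ => none
  obtain ⟨v, hv⟩ := hsol (acbI Xs xv ∅ vs {X} w)
  obtain ⟨v', hv'⟩ := hsol (witI Xs x' W w)
  have hvX : v X = w X :=
    hv.intervene_apply (hWV hXW) (by simp [acbI, hXXs])
  have hv'X : v' X = w X :=
    hv'.intervene_apply (hWV hXW) (by simp [witI, hXXs, hXW])
  have hx : v X = x := hpos vs hvs {X} (by simpa using hXW) ∅ (Finset.empty_subset _) v hv
  exact hneg v' hv' (hv'X.trans (hvX.symm.trans hx))

end General

section Prisoner

/-- The variables `A, B, C` of the prisoner model depend on the context only, so the unique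
solution evaluates the equations on the context values overridden by `I`. -/
noncomputable def prisonerSol (I : ℕ → Option ℕ) (ctx : ℕ → ℕ) (X : ℕ) : ℕ :=
  if X ∈ MP.V then (I X).getD (MP.F X ctx fun Y => (I Y).getD (ctx Y)) else 0

variable (I : ℕ → Option ℕ) (ctx : ℕ → ℕ)

theorem prisonerSol_of_lt_three {X : ℕ} (hX : X < 3) :
    prisonerSol I ctx X = (I X).getD (ctx X) := by
  interval_cases X <;> simp [prisonerSol, MP]

theorem prisonerSol_three : prisonerSol I ctx 3 =
    (I 3).getD (bI (((I 0).getD (ctx 0) = 1 ∧ (I 1).getD (ctx 1) = 1) ∨ (I 2).getD (ctx 2) = 1)) := by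
  simp [prisonerSol, MP]

theorem MP_F_congr (X : ℕ) {g h : ℕ → ℕ} (hgh : ∀ Y < 3, g Y = h Y) :
    MP.F X ctx g = MP.F X ctx h := by
  simp only [MP, hgh 0 (by norm_num), hgh 1 (by norm_num), hgh 2 (by norm_num)]

theorem isSol_prisonerSol : IsSol (MP.intervene I) ctx (prisonerSol I ctx) := by
  refine ⟨fun X hX => ?_, fun X hX => if_neg hX⟩
  show _ = (I X).getD (MP.F X ctx _)
  rw [MP_F_congr ctx X fun Y hY => prisonerSol_of_lt_three I ctx hY]
  exact if_pos hX

theorem eq_prisonerSol_of_isSol {v : ℕ → ℕ} (hv : IsSol (MP.intervene I) ctx v) :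
    v = prisonerSol I ctx := by
  have hbase : ∀ Y < 3, v Y = (I Y).getD (ctx Y) := fun Y hY => by
    rw [hv.1 Y (by simp [CM.intervene, MP]; omega)]
    simp [CM.intervene, MP, show Y ≠ 3 by omega]
  funext X
  by_cases hX : X ∈ MP.V
  · rw [hv.1 X hX]
    simp only [prisonerSol, if_pos hX, CM.intervene, MP_F_congr ctx X hbase]
  · rw [hv.2 X hX]
    exact (if_neg hX).symm

theorem MP_satF_iff (φ : BForm) : SatF MP ctx I φ ↔ φ.eval (prisonerSol I ctx) :=
  satF_iff_of_isSol_unique (isSol_prisonerSol I ctx) fun _ => eq_prisonerSol_of_isSol I ctx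

theorem MP_exists_isSol : ∃ v, IsSol (MP.intervene I) ctx v :=
  ⟨_, isSol_prisonerSol I ctx⟩

theorem prisoner_ac1 : AC1 MP uP {0} (fun _ => 1) (.prim 3 1) := by
  intro v hv
  rw [eq_prisonerSol_of_isSol (fun _ => none) uP hv]
  simp [BForm.eval, prisonerSol_three, prisonerSol_of_lt_three, uP, bI]

theorem prisoner_wit' : Wit' MP uP {0} (fun _ => 1) (.prim 3 1) {1, 2}
    (fun Y => if Y = 1 then 1 else 0) (fun _ => 0) := by
  refine ⟨by decide, by decide, ?_, fun vs hvs Z' hZ' => ?_⟩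
  · rw [MP_satF_iff]
    simp [BForm.eval, prisonerSol_three, witI, bI]
  · have hvs3 : vs 3 = 1 := (prisoner_ac1 vs hvs).2
    have hZ'sub : Z' ⊆ {0, 3} := hZ'.trans (by simp [MP])
    have h1 : 1 ∉ Z' := fun h => by simpa using hZ'sub h
    have h2 : 2 ∉ Z' := fun h => by simpa using hZ'sub h
    rw [MP_satF_iff]
    by_cases h3 : 3 ∈ Z' <;> simp [BForm.eval, prisonerSol_three, acbI, bI, h1, h2, h3, hvs3]

theorem prisoner_not_wit (W : Finset ℕ) (w x' : ℕ → ℕ) :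
    ¬ Wit MP uP {0} (fun _ => 1) (.prim 3 1) W w x' := by
  intro hwit
  have h3W : 3 ∉ W := hwit.outcome_not_mem (MP_exists_isSol · uP)
  obtain ⟨-, hXs, hneg, hpos⟩ := hwit
  have h0W : 0 ∉ W := (Finset.mem_sdiff.1 (hXs (Finset.mem_singleton_self 0))).2
  have hC : 2 ∈ W ∧ w 2 ≠ 1 := by
    rw [MP_satF_iff] at hneg
    by_contra h
    apply hneg
    by_cases h2 : 2 ∈ W <;> simp_all [BForm.eval, prisonerSol_three, witI, uP, bI]
  have hpos' := hpos _ (isSol_prisonerSol (fun _ => none) uP) {2} (by simpa using hC.1) ∅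
    (Finset.empty_subset _)
  rw [MP_satF_iff] at hpos'
  simp [BForm.eval, prisonerSol_three, acbI, uP, bI, hC.2] at hpos'

end Prisoner

/-- in the prisoner model with A = 1, B = 0, C = 1, A = 1 is an
actual cause of D = 1 under the original HP definition (AC2(b')) with witness
W⃗ = {B, C}, (B ← 1, C ← 0), but not under the updated definition (AC2(b)),
since (M, u) ⊨ [A ← 1, C ← 0](D = 0). -/
theorem prisoner :
    IsCause' MP uP {0} (fun _ => 1) (.prim 3 1) ∧
    Wit' MP uP {0} (fun _ => 1) (.prim 3 1) {1, 2} (fun Y => if Y = 1 then 1 else 0)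
      (fun _ => 0) ∧
    ¬ IsCause MP uP {0} (fun _ => 1) (.prim 3 1) ∧
    SatF MP uP (doSet {0, 2} (fun Y => if Y = 0 then 1 else 0)) (.prim 3 0) := by
  refine ⟨isCause'_singleton (MP_exists_isSol · uP) ⟨prisoner_ac1, _, _, _, prisoner_wit'⟩,
    prisoner_wit', fun ⟨⟨_, W, w, x', hwit⟩, _⟩ => prisoner_not_wit W w x' hwit, ?_⟩
  rw [MP_satF_iff]
  simp [BForm.eval, prisonerSol_three, doSet, uP, bI]
end

section
/- In the prisoner model extended with binary variable E satisfying E = A ∧ B and D = E ∨ C (variables A, B, C set by context; in context u, A = 1, B = 0, C = 1, hence E = 0, D = 1): A = 1 is not an actual cause of D = 1, under both the original HP definition (using AC2(b')) and the updated HP definition (using AC2(b)). Moreover, this extended model is a conservative extension of the original prisoner model with D = (A ∧ B) ∨ C. -/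
open Classical

/-- The extended prisoner model: adds E = 4 with E = A ∧ B and D = E ∨ C. -/
noncomputable def MP2 : CM :=
  ⟨{0, 1, 2, 3, 4}, fun X ctx g =>
    if X = 4 then bI (g 0 = 1 ∧ g 1 = 1)
    else if X = 3 then bI (g 4 = 1 ∨ g 2 = 1)
    else ctx X⟩

/-!
Both models are acyclic, so every intervention has exactly one solution, which we write down.
Given an AC2 witness `(W, w, x')` for `A = 1`, AC2(a) says `D ≠ 1` in the world `A ← x', W ← w`.
Now apply AC2(b') with `Z' = {E} \ W`: there `E` is either frozen to `w E` or to its actual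
value `0` (as `B = 0` in `uP`), so it is on only if it was on in the AC2(a) world, while `C`
is the same in both worlds; hence `D ≠ 1` there as well, contradicting AC2(b'). Since AC2(b)
implies AC2(b'), neither definition makes `A = 1` a cause. For conservativity, once the other
old variables are fixed, `D` is the same Boolean function of `A`, `B`, `C` in both models.
-/

@[simp] lemma bI_eq_one {p : Prop} : bI p = 1 ↔ p := by
  unfold bI; split_ifs <;> simp_all

lemma Wit.wit' {M : CM} {ctx : ℕ → ℕ} {Xs : Finset ℕ} {xv : ℕ → ℕ} {φ : BForm}
    {W : Finset ℕ} {w x' : ℕ → ℕ} (h : Wit M ctx Xs xv φ W w x') :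
    Wit' M ctx Xs xv φ W w x' :=
  ⟨h.1, h.2.1, h.2.2.1, fun vs hvs Z' hZ' => h.2.2.2 vs hvs W subset_rfl Z' hZ'⟩

lemma PreCause.preCause' {M : CM} {ctx : ℕ → ℕ} {Xs : Finset ℕ} {xv : ℕ → ℕ} {φ : BForm}
    (h : PreCause M ctx Xs xv φ) : PreCause' M ctx Xs xv φ :=
  let ⟨W, w, x', hWit⟩ := h.2
  ⟨h.1, W, w, x', hWit.wit'⟩

lemma isSol_intervene_iff {M : CM} {ctx : ℕ → ℕ} {I : ℕ → Option ℕ} {v : ℕ → ℕ} :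
    IsSol (M.intervene I) ctx v ↔
      ∀ X, v X = if X ∈ M.V then (I X).getD (M.F X ctx v) else 0 := by
  refine ⟨fun ⟨hV, hnV⟩ X => ?_, fun h => ⟨fun X (hX : X ∈ M.V) => ?_, fun X (hX : X ∉ M.V) => ?_⟩⟩
  · split_ifs with hX
    exacts [hV X hX, hnV X hX]
  · simpa [CM.intervene, hX] using h X
  · simpa [hX] using h X

lemma sat_iff_of_isSol_unique {M : CM} {ctx : ℕ → ℕ} {I : ℕ → Option ℕ} {s : ℕ → ℕ}
    (hs : IsSol (M.intervene I) ctx s) (huniq : ∀ v, IsSol (M.intervene I) ctx v → v = s)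
    {X x : ℕ} : Sat M ctx I X x ↔ s X = x :=
  ⟨fun h => h s hs, fun h v hv => huniq v hv ▸ h⟩

namespace MP

noncomputable def sol (I : ℕ → Option ℕ) (ctx : ℕ → ℕ) : ℕ → ℕ :=
  let a := (I 0).getD (ctx 0)
  let b := (I 1).getD (ctx 1)
  let c := (I 2).getD (ctx 2)
  let d := (I 3).getD (bI ((a = 1 ∧ b = 1) ∨ c = 1))
  fun X => if X = 0 then a else if X = 1 then b else if X = 2 then c else if X = 3 then d else 0

lemma isSol_sol (I : ℕ → Option ℕ) (ctx : ℕ → ℕ) : IsSol (MP.intervene I) ctx (sol I ctx) := by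
  refine isSol_intervene_iff.2 fun X => ?_
  by_cases hX : X ∈ MP.V
  · simp only [MP, Finset.mem_insert, Finset.mem_singleton] at hX
    rcases hX with rfl | rfl | rfl | rfl <;> simp [sol, MP]
  · simp_all [sol, MP]

lemma eq_sol_of_isSol {I : ℕ → Option ℕ} {ctx v : ℕ → ℕ} (hv : IsSol (MP.intervene I) ctx v) :
    v = sol I ctx := by
  have h := isSol_intervene_iff.1 hv
  have h0 : v 0 = (I 0).getD (ctx 0) := by simpa [MP] using h 0
  have h1 : v 1 = (I 1).getD (ctx 1) := by simpa [MP] using h 1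
  have h2 : v 2 = (I 2).getD (ctx 2) := by simpa [MP] using h 2
  have h3 : v 3 = (I 3).getD (bI ((v 0 = 1 ∧ v 1 = 1) ∨ v 2 = 1)) := by simpa [MP] using h 3
  funext X
  by_cases hX : X ∈ MP.V
  · simp only [MP, Finset.mem_insert, Finset.mem_singleton] at hX
    rcases hX with rfl | rfl | rfl | rfl <;> simp [sol, h0, h1, h2, h3]
  · simp_all [sol, MP]

end MP

namespace MP2

noncomputable def sol (I : ℕ → Option ℕ) (ctx : ℕ → ℕ) : ℕ → ℕ :=
  let a := (I 0).getD (ctx 0)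
  let b := (I 1).getD (ctx 1)
  let c := (I 2).getD (ctx 2)
  let e := (I 4).getD (bI (a = 1 ∧ b = 1))
  let d := (I 3).getD (bI (e = 1 ∨ c = 1))
  fun X => if X = 0 then a else if X = 1 then b else if X = 2 then c
    else if X = 3 then d else if X = 4 then e else 0

lemma isSol_sol (I : ℕ → Option ℕ) (ctx : ℕ → ℕ) : IsSol (MP2.intervene I) ctx (sol I ctx) := by
  refine isSol_intervene_iff.2 fun X => ?_
  by_cases hX : X ∈ MP2.V
  · simp only [MP2, Finset.mem_insert, Finset.mem_singleton] at hX
    rcases hX with rfl | rfl | rfl | rfl | rfl <;> simp [sol, MP2]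
  · simp_all [sol, MP2]

lemma eq_sol_of_isSol {I : ℕ → Option ℕ} {ctx v : ℕ → ℕ} (hv : IsSol (MP2.intervene I) ctx v) :
    v = sol I ctx := by
  have h := isSol_intervene_iff.1 hv
  have h0 : v 0 = (I 0).getD (ctx 0) := by simpa [MP2] using h 0
  have h1 : v 1 = (I 1).getD (ctx 1) := by simpa [MP2] using h 1
  have h2 : v 2 = (I 2).getD (ctx 2) := by simpa [MP2] using h 2
  have h4 : v 4 = (I 4).getD (bI (v 0 = 1 ∧ v 1 = 1)) := by simpa [MP2] using h 4
  have h3 : v 3 = (I 3).getD (bI (v 4 = 1 ∨ v 2 = 1)) := by simpa [MP2] using h 3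
  funext X
  by_cases hX : X ∈ MP2.V
  · simp only [MP2, Finset.mem_insert, Finset.mem_singleton] at hX
    rcases hX with rfl | rfl | rfl | rfl | rfl <;> simp [sol, h0, h1, h2, h3, h4]
  · simp_all [sol, MP2]

lemma sol_witI_D_of_sol_acbI_D (W : Finset ℕ) (w x' : ℕ → ℕ)
    (h : sol (acbI {0} (fun _ => 1) ({4} \ W) (sol (fun _ => none) uP) W w) uP 3 = 1) :
    sol (witI {0} x' W w) uP 3 = 1 := by
  by_cases h3 : 3 ∈ W <;> by_cases h4 : 4 ∈ W <;> simp_all [sol, acbI, witI, uP]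

lemma not_preCause' : ¬ PreCause' MP2 uP {0} (fun _ => 1) (.prim 3 1) := by
  rintro ⟨-, W, w, x', -, -, hAC2a, hAC2b⟩
  refine hAC2a _ (isSol_sol _ _) (sol_witI_D_of_sol_acbI_D W w x' ?_)
  have hZ' : {4} \ W ⊆ MP2.V \ W := Finset.sdiff_subset_sdiff (by simp [MP2]) subset_rfl
  have hActual : IsSol MP2 uP (sol (fun _ => none) uP) := isSol_sol _ _
  exact hAC2b _ hActual _ hZ' _ (isSol_sol _ _)

end MP2

lemma consExt_MP_MP2 : ConsExt MP MP2 := by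
  refine ⟨by simp [MP, MP2, Finset.subset_iff], fun ctx x X hX w => ?_⟩
  rw [sat_iff_of_isSol_unique (MP.isSol_sol _ _) fun _ => MP.eq_sol_of_isSol,
    sat_iff_of_isSol_unique (MP2.isSol_sol _ _) fun _ => MP2.eq_sol_of_isSol]
  simp only [MP, Finset.mem_insert, Finset.mem_singleton] at hX
  rcases hX with rfl | rfl | rfl | rfl <;> simp [MP.sol, MP2.sol, doSet, MP]

/-- in the extended prisoner model, A = 1 is not an actual cause
of D = 1 under either the original (AC2(b')) or the updated (AC2(b)) HP
definition, and the extended model is a conservative extension of the original. -/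
theorem prisoner_extended :
    ¬ IsCause' MP2 uP {0} (fun _ => 1) (.prim 3 1) ∧
    ¬ IsCause MP2 uP {0} (fun _ => 1) (.prim 3 1) ∧
    ConsExt MP MP2 :=
  ⟨fun h => MP2.not_preCause' h.1, fun h => MP2.not_preCause' h.1.preCause', consExt_MP_MP2⟩
end
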